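/- Let Θ₁ and Θ₂ be two distinct commuting involutive antimorphisms of A* for a finite alphabet A such that the composition Θ₁Θ₂ (a morphism permuting the letters) has no fixed letter, i.e., Θ₁Θ₂ restricted to A is a derangement. If u is an infinite word over A whose language is closed under both Θ₁ and Θ₂, then for all n ≥ 1: ΔC(n) + 4 ≥ P_{Θ₁}(n) + P_{Θ₂}(n) + P_{Θ₁}(n+1) + P_{Θ₂}(n+1). -/

import Mathlib

open scoped Classical

/-- The finite word `w` occurs in the infinite word `u` at position `i`. -/
def OccursAt {A : Type*} (u : ℕ → A) (w : List A) (i : ℕ) : Prop :=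
  w = (List.range w.length).map fun k => u (i + k)

/-- The finite word `w` is a factor of the infinite word `u`. -/
def IsFactor {A : Type*} (u : ℕ → A) (w : List A) : Prop :=
  ∃ i, OccursAt u w i

/-- The (involutive) antimorphism of `A*` induced by the letter map `θ`:
it reverses a word and applies `θ` letterwise. -/
def antim {A : Type*} (θ : A → A) (w : List A) : List A :=
  (w.map θ).reverse

/-- `w` is a `θ`-palindrome, i.e. a fixed point of the antimorphism induced by `θ`. -/
def IsPalin {A : Type*} (θ : A → A) (w : List A) : Prop :=
  antim θ w = w

/-- Factor complexity of the infinite word `u`. -/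
noncomputable def fC {A : Type*} (u : ℕ → A) (n : ℕ) : ℕ :=
  Set.ncard {w : List A | w.length = n ∧ IsFactor u w}

/-- `θ`-palindromic complexity of the infinite word `u`. -/
noncomputable def fP {A : Type*} (u : ℕ → A) (θ : A → A) (n : ℕ) : ℕ :=
  Set.ncard {w : List A | w.length = n ∧ IsFactor u w ∧ IsPalin θ w}

/-- `γ_Θ(w)`: the number of pairs `{a, θ a}` with `a` occurring in `w` and `a ≠ θ a`. -/
noncomputable def gammaTheta {A : Type*} (θ : A → A) (w : List A) : ℕ :=
  Set.ncard {s : Set A | ∃ a ∈ w, θ a ≠ a ∧ s = {a, θ a}}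

/-- The set of `θ`-palindromic factors of the finite word `w`. -/
def palFactors {A : Type*} (θ : A → A) (w : List A) : Set (List A) :=
  {p | p <:+: w ∧ IsPalin θ p}

/-- The `Θ`-defect of a finite word `w`. -/
noncomputable def defect {A : Type*} (θ : A → A) (w : List A) : ℤ :=
  (w.length : ℤ) + 1 - gammaTheta θ w - Set.ncard (palFactors θ w)

/-- The number of occurrences of `w` in the finite word `v`. -/
noncomputable def numOcc {A : Type*} (w v : List A) : ℕ :=
  Set.ncard {i : ℕ | i + w.length ≤ v.length ∧ w <+: v.drop i}

/-!
The Klein group `G = {id, Θ₁, Θ₂, Θ₁Θ₂}` acts on every language `L_m(u)`, and `Θ₁Θ₂` fixes no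
nonempty word. Burnside's lemma therefore gives `C(n) + P₁(n) + P₂(n) ≤ 4 · #(L_n / G)`, and since
a factor of length `n + 1` is a `Θ₁`-palindrome, a `Θ₂`-palindrome, or has a free orbit,
`C(n + 1) ≥ P₁(n + 1) + P₂(n + 1) + 4 · #(free orbits in L_{n+1})`.

In the quotient of the Rauzy graph by `G`, the vertices are the orbits of `L_n` and a factor of
length `n + 1` is an edge from the orbit of its prefix to the orbit of its suffix; palindromic
factors are loops. The graph is connected, since `u` walks through it, so
`#(L_n / G) ≤ #(free orbits in L_{n+1}) + 1`, and the three estimates add up to the inequality.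
-/

open Finset

/-- A walk `x 0, x 1, …` whose step `i` crosses the edge labelled `y i` visits at most one more
vertex than the number of distinct labels of its non-loop steps. -/
theorem card_image_range_succ_le_card_image_filter_add_one {α β : Type*} [DecidableEq α]
    [DecidableEq β] (x : ℕ → α) (y : ℕ → β)
    (hy : ∀ i j, y i = y j → s(x i, x (i + 1)) = s(x j, x (j + 1))) (N : ℕ) :
    #((range (N + 1)).image x) ≤ #(((range N).filter fun i => x (i + 1) ≠ x i).image y) + 1 := by
  induction N with
  | zero => simp
  | succ N ih =>
    have hmono : #(((range N).filter fun i => x (i + 1) ≠ x i).image y) ≤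
        #(((range (N + 1)).filter fun i => x (i + 1) ≠ x i).image y) :=
      card_le_card (image_subset_image (filter_subset_filter _ (range_subset_range.2 N.le_succ)))
    rw [range_add_one (n := N + 1), image_insert]
    by_cases hold : x (N + 1) ∈ (range (N + 1)).image x
    · rw [insert_eq_of_mem hold]
      omega
    have hmove : x (N + 1) ≠ x N := by
      rintro h
      exact hold (h ▸ mem_image_of_mem x (self_mem_range_succ N))
    have hfresh : y N ∉ ((range N).filter fun i => x (i + 1) ≠ x i).image y := by
      simp only [mem_image, mem_filter, mem_range, not_exists, not_and]
      intro i hi hyi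
      have hend : x (N + 1) ∈ s(x i, x (i + 1)) := by rw [hy i N hyi]; exact Sym2.mem_mk_right _ _
      rcases Sym2.mem_iff.1 hend with h | h <;> exact hold (h ▸ mem_image_of_mem x (by simp; omega))
    have hedges : ((range (N + 1)).filter fun i => x (i + 1) ≠ x i) =
        insert N ((range N).filter fun i => x (i + 1) ≠ x i) := by
      rw [range_add_one, filter_insert, if_pos hmove]
    rw [hedges, image_insert, card_insert_of_notMem hold, card_insert_of_notMem hfresh]
    omega

/-- Burnside's lemma for orbits listed with multiplicity: if `O x` lists `g • x` for the `k`
elements `g` of a group, then `(O x).count x` is the order of the stabilizer of `x`. -/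
theorem sum_count_self_eq_mul_card_image {α : Type*} [DecidableEq α] (O : α → List α) {k : ℕ}
    (hlen : ∀ x, (O x).length = k) (hself : ∀ x, x ∈ O x)
    (hperm : ∀ x y, y ∈ O x → List.Perm (O y) (O x))
    {L : Finset α} (hL : ∀ x ∈ L, ∀ y ∈ O x, y ∈ L) :
    ∑ x ∈ L, (O x).count x = k * #(L.image fun x => (O x).toFinset) := by
  rw [← sum_fiberwise_of_maps_to (fun x hx => mem_image_of_mem (fun x => (O x).toFinset) hx),
    mul_comm, ← smul_eq_mul, ← sum_const]
  refine sum_congr rfl fun t ht => ?_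
  obtain ⟨x, hx, rfl⟩ := mem_image.1 ht
  have hfiber : L.filter (fun y => (O y).toFinset = (O x).toFinset) = (O x).toFinset := by
    ext y
    simp only [mem_filter, List.mem_toFinset]
    refine ⟨fun h => ?_, fun hy => ⟨hL x hx y hy, List.toFinset_eq_of_perm _ _ (hperm x y hy)⟩⟩
    rw [← List.mem_toFinset, ← h.2, List.mem_toFinset]
    exact hself y
  rw [hfiber, ← hlen x, ← List.sum_toFinset_count_eq_length]
  exact sum_congr rfl fun y hy => (hperm x y (List.mem_toFinset.1 hy)).count_eq y

section KleinOrbit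

variable {α : Type*} {σ τ : α → α}

def kleinOrbit (σ τ : α → α) (x : α) : List α := [x, σ x, τ x, σ (τ x)]

theorem mem_kleinOrbit {x y : α} :
    y ∈ kleinOrbit σ τ x ↔ y = x ∨ y = σ x ∨ y = τ x ∨ y = σ (τ x) := by
  simp [kleinOrbit]

theorem kleinOrbit_apply_left (hστ : Function.Commute σ τ) (x : α) :
    kleinOrbit σ τ (σ x) = (kleinOrbit σ τ x).map σ := by
  simp [kleinOrbit, hστ x, hστ (σ x)]

theorem kleinOrbit_apply_right (hστ : Function.Commute σ τ) (x : α) :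
    kleinOrbit σ τ (τ x) = (kleinOrbit σ τ x).map τ := by
  simp [kleinOrbit, hστ x, hστ (τ x)]

theorem map_left_kleinOrbit_perm (hσ : Function.Involutive σ) (x : α) :
    List.Perm ((kleinOrbit σ τ x).map σ) (kleinOrbit σ τ x) := by
  simp only [kleinOrbit, List.map_cons, List.map_nil, hσ _]
  exact (List.Perm.swap _ _ _).trans (.cons _ (.cons _ (.swap _ _ _)))

theorem map_right_kleinOrbit_perm (hτ : Function.Involutive τ) (hστ : Function.Commute σ τ)
    (x : α) : List.Perm ((kleinOrbit σ τ x).map τ) (kleinOrbit σ τ x) := by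
  simp only [kleinOrbit, List.map_cons, List.map_nil, ← hστ _, hτ _]
  exact List.perm_append_comm (l₁ := [τ x, σ (τ x)]) (l₂ := [x, σ x])

theorem kleinOrbit_perm_of_mem (hσ : Function.Involutive σ) (hτ : Function.Involutive τ)
    (hστ : Function.Commute σ τ) {x y : α} (hy : y ∈ kleinOrbit σ τ x) :
    List.Perm (kleinOrbit σ τ y) (kleinOrbit σ τ x) := by
  have left z : List.Perm (kleinOrbit σ τ (σ z)) (kleinOrbit σ τ z) :=
    kleinOrbit_apply_left hστ z ▸ map_left_kleinOrbit_perm hσ z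
  have right z : List.Perm (kleinOrbit σ τ (τ z)) (kleinOrbit σ τ z) :=
    kleinOrbit_apply_right hστ z ▸ map_right_kleinOrbit_perm hτ hστ z
  rcases mem_kleinOrbit.1 hy with rfl | rfl | rfl | rfl
  exacts [.refl _, left x, right x, (left _).trans (right x)]

variable [DecidableEq α]

def kleinClass (σ τ : α → α) (x : α) : Finset α := (kleinOrbit σ τ x).toFinset

theorem mem_kleinClass_self (x : α) : x ∈ kleinClass σ τ x :=
  List.mem_toFinset.2 List.mem_cons_self

theorem mem_kleinOrbit_of_kleinClass_eq {x y : α} (h : kleinClass σ τ x = kleinClass σ τ y) :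
    y ∈ kleinOrbit σ τ x :=
  List.mem_toFinset.1 (show y ∈ kleinClass σ τ x from h ▸ mem_kleinClass_self y)

/-- The number of elements of `{id, σ, τ, σ ∘ τ}` fixing `x`. -/
def kleinStabilizerCard (σ τ : α → α) (x : α) : ℕ := (kleinOrbit σ τ x).count x

theorem kleinStabilizerCard_eq (x : α) :
    kleinStabilizerCard σ τ x = 1 + (if σ x = x then 1 else 0) + (if τ x = x then 1 else 0)
      + (if σ (τ x) = x then 1 else 0) := by
  simp only [kleinStabilizerCard, kleinOrbit, List.count_cons, List.count_nil, beq_iff_eq,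
    ↓reduceIte]
  omega

theorem card_filter_fixed_add_card_filter_fixed_add_card_filter_free_le {L : Finset α}
    (hL : ∀ x ∈ L, σ (τ x) ≠ x) :
    #(L.filter fun x => σ x = x) + #(L.filter fun x => τ x = x)
      + #(L.filter fun x => kleinStabilizerCard σ τ x = 1) ≤ #L := by
  rw [card_filter, card_filter, card_filter, card_eq_sum_ones, ← sum_add_distrib,
    ← sum_add_distrib]
  refine sum_le_sum fun x hx => ?_
  have hfix := hL x hx
  rw [kleinStabilizerCard_eq]
  split_ifs <;> simp_all

variable (hσ : Function.Involutive σ) (hτ : Function.Involutive τ) (hστ : Function.Commute σ τ)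
include hσ hτ hστ

theorem kleinStabilizerCard_eq_of_mem {x y : α} (hy : y ∈ kleinOrbit σ τ x) :
    kleinStabilizerCard σ τ y = kleinStabilizerCard σ τ x := by
  have left z : kleinStabilizerCard σ τ (σ z) = kleinStabilizerCard σ τ z := by
    rw [kleinStabilizerCard, kleinOrbit_apply_left hστ,
      List.count_map_of_injective _ _ hσ.injective, kleinStabilizerCard]
  have right z : kleinStabilizerCard σ τ (τ z) = kleinStabilizerCard σ τ z := by
    rw [kleinStabilizerCard, kleinOrbit_apply_right hστ,
      List.count_map_of_injective _ _ hτ.injective, kleinStabilizerCard]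
  rcases mem_kleinOrbit.1 hy with rfl | rfl | rfl | rfl
  exacts [rfl, left x, right x, (left _).trans (right x)]

theorem kleinClass_eq_of_mem {x y : α} (hy : y ∈ kleinOrbit σ τ x) :
    kleinClass σ τ y = kleinClass σ τ x :=
  List.toFinset_eq_of_perm _ _ (kleinOrbit_perm_of_mem hσ hτ hστ hy)

theorem kleinClass_apply_left (x : α) : kleinClass σ τ (σ x) = kleinClass σ τ x :=
  kleinClass_eq_of_mem hσ hτ hστ (by simp [mem_kleinOrbit])

theorem kleinClass_apply_right (x : α) : kleinClass σ τ (τ x) = kleinClass σ τ x :=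
  kleinClass_eq_of_mem hσ hτ hστ (by simp [mem_kleinOrbit])

theorem sum_kleinStabilizerCard {L : Finset α} (hL : ∀ x ∈ L, ∀ y ∈ kleinOrbit σ τ x, y ∈ L) :
    ∑ x ∈ L, kleinStabilizerCard σ τ x = 4 * #(L.image (kleinClass σ τ)) :=
  sum_count_self_eq_mul_card_image (kleinOrbit σ τ) (fun _ => rfl) (fun _ => List.mem_cons_self)
    (fun _ _ => kleinOrbit_perm_of_mem hσ hτ hστ) hL

theorem card_add_card_filter_fixed_le_four_mul_card_image {L : Finset α}
    (hL : ∀ x ∈ L, ∀ y ∈ kleinOrbit σ τ x, y ∈ L) :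
    #L + #(L.filter fun x => σ x = x) + #(L.filter fun x => τ x = x)
      ≤ 4 * #(L.image (kleinClass σ τ)) := by
  rw [← sum_kleinStabilizerCard hσ hτ hστ hL]
  simp only [kleinStabilizerCard_eq, sum_add_distrib]
  rw [card_filter, card_filter, card_eq_sum_ones]
  omega

theorem card_filter_free_eq_four_mul_card_image {L : Finset α}
    (hL : ∀ x ∈ L, ∀ y ∈ kleinOrbit σ τ x, y ∈ L) :
    #(L.filter fun x => kleinStabilizerCard σ τ x = 1)
      = 4 * #((L.filter fun x => kleinStabilizerCard σ τ x = 1).image (kleinClass σ τ)) := by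
  rw [← sum_kleinStabilizerCard hσ hτ hστ, card_eq_sum_ones]
  · exact sum_congr rfl fun x hx => (mem_filter.1 hx).2.symm
  · simp only [mem_filter]
    exact fun x hx y hy => ⟨hL x hx.1 y hy, (kleinStabilizerCard_eq_of_mem hσ hτ hστ hy).trans hx.2⟩

end KleinOrbit

section Antimorphism

variable {A : Type*}

@[simp]
theorem length_antim (θ : A → A) (w : List A) : (antim θ w).length = w.length := by
  simp [antim]

theorem antim_antim (θ θ' : A → A) (w : List A) : antim θ (antim θ' w) = w.map (θ ∘ θ') := by
  simp [antim]

theorem involutive_antim {θ : A → A} (h : Function.Involutive θ) :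
    Function.Involutive (antim θ) :=
  fun w => by rw [antim_antim, h.comp_self, List.map_id]

theorem commute_antim {θ₁ θ₂ : A → A} (hcomm : θ₁ ∘ θ₂ = θ₂ ∘ θ₁) :
    Function.Commute (antim θ₁) (antim θ₂) :=
  fun w => by rw [antim_antim, antim_antim, hcomm]

theorem antim_antim_ne_self {θ₁ θ₂ : A → A} (hder : ∀ a, θ₁ (θ₂ a) ≠ a) {w : List A}
    (hw : w ≠ []) : antim θ₁ (antim θ₂ w) ≠ w := by
  obtain ⟨a, t, rfl⟩ := List.exists_cons_of_ne_nil hw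
  rw [antim_antim, List.map_cons, Ne, List.cons.injEq, not_and]
  exact fun h => absurd h (hder a)

theorem dropLast_antim (θ : A → A) (w : List A) : (antim θ w).dropLast = antim θ w.tail := by
  rw [antim, List.dropLast_reverse, ← List.map_tail, antim]

theorem tail_antim (θ : A → A) (w : List A) : (antim θ w).tail = antim θ w.dropLast := by
  rw [antim, List.tail_reverse, ← List.map_dropLast, antim]

end Antimorphism

section Factors

variable {A : Type*} (u : ℕ → A)

def window (i m : ℕ) : List A := (List.range m).map fun k => u (i + k)

@[simp]
theorem length_window (i m : ℕ) : (window u i m).length = m := by simp [window]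

theorem isFactor_window (i m : ℕ) : IsFactor u (window u i m) :=
  ⟨i, by rw [OccursAt, length_window]; rfl⟩

theorem dropLast_window (i m : ℕ) : (window u i (m + 1)).dropLast = window u i m := by
  simp [window, List.range_succ]

theorem tail_window (i m : ℕ) : (window u i (m + 1)).tail = window u (i + 1) m := by
  simp [window, List.range_succ_eq_map, Nat.add_assoc, Nat.add_comm 1]

variable [Finite A]

theorem finite_factors (m : ℕ) : {w : List A | w.length = m ∧ IsFactor u w}.Finite :=
  (List.finite_length_eq A m).subset fun _ hw => hw.1

noncomputable def factorFinset (m : ℕ) : Finset (List A) := (finite_factors u m).toFinset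

theorem mem_factorFinset {m : ℕ} {w : List A} :
    w ∈ factorFinset u m ↔ w.length = m ∧ IsFactor u w :=
  Set.Finite.mem_toFinset _

theorem ne_nil_of_mem_factorFinset_succ {m : ℕ} {w : List A} (hw : w ∈ factorFinset u (m + 1)) :
    w ≠ [] :=
  List.ne_nil_of_length_pos (by rw [((mem_factorFinset u).1 hw).1]; omega)

theorem fC_eq_card (m : ℕ) : fC u m = #(factorFinset u m) :=
  Set.ncard_eq_toFinset_card _ (finite_factors u m)

theorem fP_eq_card_filter [DecidableEq A] (θ : A → A) (m : ℕ) :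
    fP u θ m = #((factorFinset u m).filter fun w => antim θ w = w) := by
  rw [fP, ← Set.ncard_coe_finset]
  congr 1
  ext w
  simp [mem_factorFinset, IsPalin, and_assoc]

theorem exists_factorFinset_subset_image_window [DecidableEq A] (m : ℕ) :
    ∃ N, factorFinset u m ⊆ (range N).image fun i => window u i m := by
  have hocc (w : List A) (hw : w ∈ factorFinset u m) : ∃ i, window u i m = w := by
    obtain ⟨hlen, i, hi⟩ := (mem_factorFinset u).1 hw
    exact ⟨i, by rw [hi, hlen]; rfl⟩
  choose idx hidx using hocc
  obtain ⟨N, hN⟩ := exists_nat_subset_range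
    ((factorFinset u m).attach.image fun w : {w // w ∈ factorFinset u m} => idx w.1 w.2)
  exact ⟨N, fun w hw => mem_image.2 ⟨idx w hw, hN (mem_image.2 ⟨⟨w, hw⟩, mem_attach _ _, rfl⟩),
    hidx w hw⟩⟩

end Factors

section QuotientRauzyGraph

variable {A : Type*} {θ₁ θ₂ : A → A}

theorem mem_factorFinset_of_mem_kleinOrbit [Finite A] {u : ℕ → A}
    (hc₁ : ∀ w : List A, IsFactor u w → IsFactor u (antim θ₁ w))
    (hc₂ : ∀ w : List A, IsFactor u w → IsFactor u (antim θ₂ w)) {m : ℕ} {w y : List A}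
    (hw : w ∈ factorFinset u m) (hy : y ∈ kleinOrbit (antim θ₁) (antim θ₂) w) :
    y ∈ factorFinset u m := by
  rw [mem_factorFinset] at hw ⊢
  rcases mem_kleinOrbit.1 hy with rfl | rfl | rfl | rfl
  exacts [hw, ⟨by simp [hw.1], hc₁ _ hw.2⟩, ⟨by simp [hw.1], hc₂ _ hw.2⟩,
    ⟨by simp [hw.1], hc₁ _ (hc₂ _ hw.2)⟩]

variable [DecidableEq A]

local notation "𝒪" => kleinClass (antim θ₁) (antim θ₂)

variable (h₁ : Function.Involutive θ₁) (h₂ : Function.Involutive θ₂) (hcomm : θ₁ ∘ θ₂ = θ₂ ∘ θ₁)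
include h₁ h₂ hcomm

theorem sym2_kleinClass_dropLast_tail_eq_of_mem {e e' : List A}
    (he' : e' ∈ kleinOrbit (antim θ₁) (antim θ₂) e) :
    s(𝒪 e'.dropLast, 𝒪 e'.tail) = s(𝒪 e.dropLast, 𝒪 e.tail) := by
  have hσ := involutive_antim h₁
  have hτ := involutive_antim h₂
  have hστ := commute_antim hcomm
  rcases mem_kleinOrbit.1 he' with rfl | rfl | rfl | rfl <;>
    simp only [dropLast_antim, tail_antim, kleinClass_apply_left hσ hτ hστ,
      kleinClass_apply_right hσ hτ hστ, Sym2.eq_swap]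

theorem kleinClass_dropLast_eq_tail_of_ne_one (hder : ∀ a, θ₁ (θ₂ a) ≠ a)
    {e : List A} (he : e ≠ []) (hfix : kleinStabilizerCard (antim θ₁) (antim θ₂) e ≠ 1) :
    𝒪 e.dropLast = 𝒪 e.tail := by
  have hσ := involutive_antim h₁
  have hτ := involutive_antim h₂
  have hστ := commute_antim hcomm
  rw [kleinStabilizerCard_eq, if_neg (antim_antim_ne_self hder he)] at hfix
  by_cases hpal₁ : antim θ₁ e = e
  · calc 𝒪 e.dropLast = 𝒪 (antim θ₁ e).dropLast := by rw [hpal₁]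
      _ = 𝒪 e.tail := by rw [dropLast_antim, kleinClass_apply_left hσ hτ hστ]
  by_cases hpal₂ : antim θ₂ e = e
  · calc 𝒪 e.dropLast = 𝒪 (antim θ₂ e).dropLast := by rw [hpal₂]
      _ = 𝒪 e.tail := by rw [dropLast_antim, kleinClass_apply_right hσ hτ hστ]
  simp [hpal₁, hpal₂] at hfix

theorem card_image_kleinClass_factorFinset_le [Finite A] (hder : ∀ a, θ₁ (θ₂ a) ≠ a)
    (u : ℕ → A) (n : ℕ) :
    #((factorFinset u n).image 𝒪) ≤ #(((factorFinset u (n + 1)).filter fun w =>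
      kleinStabilizerCard (antim θ₁) (antim θ₂) w = 1).image 𝒪) + 1 := by
  set x : ℕ → Finset (List A) := fun i => 𝒪 (window u i n)
  set y : ℕ → Finset (List A) := fun i => 𝒪 (window u i (n + 1))
  have hy i j (hij : y i = y j) : s(x i, x (i + 1)) = s(x j, x (j + 1)) := by
    have hends := sym2_kleinClass_dropLast_tail_eq_of_mem h₁ h₂ hcomm
      (mem_kleinOrbit_of_kleinClass_eq hij)
    simpa only [x, dropLast_window, tail_window] using hends.symm
  obtain ⟨N, hN⟩ := exists_factorFinset_subset_image_window u n
  calc #((factorFinset u n).image 𝒪) ≤ #((range (N + 1)).image x) := by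
        refine card_le_card fun t ht => ?_
        obtain ⟨w, hw, rfl⟩ := mem_image.1 ht
        obtain ⟨i, hi, rfl⟩ := mem_image.1 (hN hw)
        exact mem_image_of_mem x (range_subset_range.2 N.le_succ hi)
    _ ≤ #(((range N).filter fun i => x (i + 1) ≠ x i).image y) + 1 :=
        card_image_range_succ_le_card_image_filter_add_one x y hy N
    _ ≤ _ := by
        gcongr
        intro t ht
        obtain ⟨i, hi, rfl⟩ := mem_image.1 ht
        refine mem_image_of_mem _ (mem_filter.2 ⟨(mem_factorFinset u).2
          ⟨length_window u i _, isFactor_window u i _⟩, ?_⟩)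
        by_contra hfree
        have hloop := kleinClass_dropLast_eq_tail_of_ne_one h₁ h₂ hcomm hder
          (List.ne_nil_of_length_pos (by simp)) hfree
        rw [dropLast_window, tail_window] at hloop
        exact (mem_filter.1 hi).2 hloop.symm

end QuotientRauzyGraph

theorem two_antimorphisms_derangement_inequality_general
    {A : Type*} [Fintype A] (θ₁ θ₂ : A → A)
    (h₁ : Function.Involutive θ₁) (h₂ : Function.Involutive θ₂)
    (hcomm : θ₁ ∘ θ₂ = θ₂ ∘ θ₁)
    (hder : ∀ a : A, θ₁ (θ₂ a) ≠ a)
    (u : ℕ → A)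
    (hc₁ : ∀ w : List A, IsFactor u w → IsFactor u (antim θ₁ w))
    (hc₂ : ∀ w : List A, IsFactor u w → IsFactor u (antim θ₂ w))
    (n : ℕ) :
    (fC u (n+1) : ℤ) - fC u n + 4 ≥
      (fP u θ₁ n : ℤ) + fP u θ₂ n + fP u θ₁ (n+1) + fP u θ₂ (n+1) := by
  have hσ := involutive_antim h₁
  have hτ := involutive_antim h₂
  have hστ := commute_antim hcomm
  have hclosed m : ∀ w ∈ factorFinset u m, ∀ y ∈ kleinOrbit (antim θ₁) (antim θ₂) w,
      y ∈ factorFinset u m := fun _ hw _ => mem_factorFinset_of_mem_kleinOrbit hc₁ hc₂ hw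
  have hvertices := card_add_card_filter_fixed_le_four_mul_card_image hσ hτ hστ (hclosed n)
  have hedges := card_filter_free_eq_four_mul_card_image hσ hτ hστ (hclosed (n + 1))
  have hsplit := card_filter_fixed_add_card_filter_fixed_add_card_filter_free_le
    (σ := antim θ₁) (τ := antim θ₂) (L := factorFinset u (n + 1)) fun _ hw =>
      antim_antim_ne_self hder (ne_nil_of_mem_factorFinset_succ u hw)
  have hconn := card_image_kleinClass_factorFinset_le h₁ h₂ hcomm hder u n
  simp only [fC_eq_card, fP_eq_card_filter, ge_iff_le]
  omega

/-- If `Θ₁`, `Θ₂` are distinct commuting involutive antimorphisms whose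
composition is a derangement of the letters, and the language of `u` is closed under
both, then `ΔC(n) + 4 ≥ P_{Θ₁}(n) + P_{Θ₂}(n) + P_{Θ₁}(n+1) + P_{Θ₂}(n+1)` for all `n ≥ 1`. -/
theorem two_antimorphisms_derangement_inequality
    {A : Type*} [Fintype A] (θ₁ θ₂ : A → A)
    (h₁ : Function.Involutive θ₁) (h₂ : Function.Involutive θ₂)
    (hne : θ₁ ≠ θ₂) (hcomm : θ₁ ∘ θ₂ = θ₂ ∘ θ₁)
    (hder : ∀ a : A, θ₁ (θ₂ a) ≠ a)
    (u : ℕ → A) (hall : ∀ a : A, ∃ i, u i = a)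
    (hc₁ : ∀ w : List A, IsFactor u w → IsFactor u (antim θ₁ w))
    (hc₂ : ∀ w : List A, IsFactor u w → IsFactor u (antim θ₂ w))
    (n : ℕ) (hn : 1 ≤ n) :
    (fC u (n+1) : ℤ) - fC u n + 4 ≥
      (fP u θ₁ n : ℤ) + fP u θ₂ n + fP u θ₁ (n+1) + fP u θ₂ (n+1) :=
  two_antimorphisms_derangement_inequality_general θ₁ θ₂ h₁ h₂ hcomm hder u hc₁ hc₂ n
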